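/- Let η^{(1)}, ..., η^{(N)} be mutually independent environments, each satisfying (P.1)-(P.4), and such that the i-th environment satisfies the sprinkler condition (C.3) with activity rate ν_i and density range (a_i, b_i). Then the superposed environment η = (η^{(1)}, ..., η^{(N)}) satisfies the following adapted sprinkler condition: there exist constants c₆ > 0 and C₇ ≥ 4(log(20N) + 6Σ_i(b_i+1))/min_i ν_i such that for all ρ = (ρ₁,...,ρ_N) with ρ_i ∈ (a_i,b_i), and integers H, ℓ, k ≥ 1 with k ≥ C₇ and H ≥ 2ν_i ℓ k for all i: if for every 1 ≤ i ≤ N one has η'^{(i)}₀ ≼ η^{(i)}₀ on [−H,H], η^{(i)}₀([0,ℓ]) ≥ η'^{(i)}₀([0,ℓ]) + 1 and η'^{(i)}₀([−3ℓ+1,3ℓ]) ≤ 6(ρ_i+1)ℓ, then for any x ∈ {0,1} there is a coupling Q of η ~ P^{η₀} and η' ~ P^{η'₀} such that, with δ = c₆^{6(Σ_{i=1}^N(ρ_i+1))ℓ} and δ' = δ(p_∘(1−p_•))^{6(Σ_{i=1}^N(ρ_i+1))ℓ}: Q(there exists i with η^{(i)}_ℓ(x) > 0, and for all i, η'^{(i)}_ℓ(x)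 = 0) ≥ 2δ, and Q(union over i of the events {not [for all s ∈ [0,ℓ], η'^{(i)}_s ≼ η^{(i)}_s on [−H+2ν_i kℓ, H−2ν_i kℓ]]}) ≤ 20N e^{−k(min_i ν_i)ℓ/4} ≤ δ'. -/

import Mathlib

open MeasureTheory Filter Set

/-! ## Basic objects: configurations, trajectories, domination, couplings -/

/-- The space of particle configurations on `ℤ`. -/
abbrev Config : Type := ℤ → ℕ

/-- The space of (discrete-time) environment trajectories. -/
abbrev Traj : Type := ℕ → Config

/-- `η ≼ η'` on the integer interval `[a, b]`. -/
def DomOn (η η' : Config) (a b : ℤ) : Prop := ∀ x : ℤ, a ≤ x → x ≤ b → η x ≤ η' x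

/-- `η ≼ η'` on the set of integer points of the real interval `[a, b]`. -/
def DomOnR (η η' : Config) (a b : ℝ) : Prop :=
  ∀ x : ℤ, a ≤ (x : ℝ) → (x : ℝ) ≤ b → η x ≤ η' x

/-- `η([a,b]) = ∑_{x ∈ [a,b]} η(x)`. -/
noncomputable def sumIcc (η : Config) (a b : ℤ) : ℕ := ∑ x ∈ Finset.Icc a b, η x

/-- `Q` is a coupling of `μ₁` and `μ₂`. -/
def IsCoupling {A B : Type*} [MeasurableSpace A] [MeasurableSpace B]
    (μ₁ : Measure A) (μ₂ : Measure B) (Q : Measure (A × B)) : Prop :=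
  Q.map Prod.fst = μ₁ ∧ Q.map Prod.snd = μ₂

/-- The annealed law of the environment started from the stationary measure `μ ρ`. -/
noncomputable def Penv (P : Config → Measure Traj) (μ : ℝ → Measure Config) (ρ : ℝ) :
    Measure Traj :=
  (μ ρ).bind P

/-! ## The properties (P.1)-(P.4) -/

/-- (P.1): Markov property and invariance (the laws are probability measures, and the law of the
space-time shifted process is the corresponding mixture). -/
def MarkovProp (P : Config → Measure Traj) : Prop :=
  (∀ η₀ : Config, IsProbabilityMeasure (P η₀)) ∧
    ∀ (η₀ : Config) (s : ℕ) (x : ℤ),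
      (P η₀).map (fun tr : Traj => fun (t : ℕ) (y : ℤ) => tr (s + t) (x + y))
        = (P η₀).bind (fun tr : Traj => P (fun y => tr s (x + y)))

/-- (P.2): each `μ ρ`, `ρ ∈ J`, is a stationary distribution. -/
def StationaryProp (P : Config → Measure Traj) (μ : ℝ → Measure Config) (J : Set ℝ) : Prop :=
  (∀ ρ ∈ J, IsProbabilityMeasure (μ ρ)) ∧
    ∀ ρ ∈ J, ∀ s : ℕ,
      (Penv P μ ρ).map (fun tr : Traj => fun t : ℕ => tr (s + t)) = Penv P μ ρ

/-- (P.3): quenched and annealed monotonicity (stochastic domination). -/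
def MonotoneProp (P : Config → Measure Traj) (μ : ℝ → Measure Config) (J : Set ℝ) : Prop :=
  (∀ η₀' η₀ : Config, (∀ x, η₀' x ≤ η₀ x) →
      ∃ Q : Measure (Traj × Traj), IsCoupling (P η₀') (P η₀) Q ∧
        Q {p : Traj × Traj | ∀ t x, p.1 t x ≤ p.2 t x} = 1) ∧
    (∀ ρ' ρ : ℝ, ρ' ∈ J → ρ ∈ J → ρ' ≤ ρ →
      ∃ Q : Measure (Config × Config), IsCoupling (μ ρ') (μ ρ) Q ∧
        Q {p : Config × Config | ∀ x, p.1 x ≤ p.2 x} = 1)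

/-- (P.4): deviation bounds for the density at stationarity. -/
def DensityProp (P : Config → Measure Traj) (μ : ℝ → Measure Config) (J : Set ℝ) : Prop :=
  ∃ c₁ : ℝ, 0 < c₁ ∧
    ∀ ρ ∈ J, ∀ ε : ℝ, ε ∈ Set.Ioo (0 : ℝ) 1 → ∀ ℓ : ℕ, 1 ≤ ℓ →
      (Penv P μ ρ) {tr : Traj | ε * ℓ ≤ |(sumIcc (tr 0) 0 ((ℓ : ℤ) - 1) : ℝ) - ρ * ℓ|}
        ≤ ENNReal.ofReal (2 * Real.exp (-c₁ * ε ^ 2 * ℓ))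

/-! ## The coupling conditions (C.1), (C.2), (C.2.1), (C.2.2), (C.3) -/

/-- Every interval `I ⊆ [-H, H]` with `⌊ℓ/2⌋ ≤ |I| ≤ ℓ` carries empirical density at least `r`. -/
def IntervalDensityGE (η : Config) (H ℓ : ℕ) (r : ℝ) : Prop :=
  ∀ a b : ℤ, -(H : ℤ) ≤ a → b ≤ (H : ℤ) → ((ℓ / 2 : ℕ) : ℤ) ≤ b - a + 1 → b - a + 1 ≤ (ℓ : ℤ) →
    r * ((b - a + 1 : ℤ) : ℝ) ≤ (sumIcc η a b : ℝ)

/-- Every interval `I ⊆ [-H, H]` with `⌊ℓ/2⌋ ≤ |I| ≤ ℓ` carries empirical density at most `r`. -/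
def IntervalDensityLE (η : Config) (H ℓ : ℕ) (r : ℝ) : Prop :=
  ∀ a b : ℤ, -(H : ℤ) ≤ a → b ≤ (H : ℤ) → ((ℓ / 2 : ℕ) : ℤ) ≤ b - a + 1 → b - a + 1 ≤ (ℓ : ℤ) →
    (sumIcc η a b : ℝ) ≤ r * ((b - a + 1 : ℤ) : ℝ)

/-- (C.1): conservation of density. -/
def ConservationProp (ν : ℝ) (J : Set ℝ) (P : Config → Measure Traj) : Prop :=
  ∃ C₂ c₃ : ℝ, 0 < C₂ ∧ 0 < c₃ ∧
    ∀ ρ ∈ J, ∀ ε : ℝ, ε ∈ Set.Ioo (0 : ℝ) 1 → ρ + ε ∈ J →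
    ∀ ℓ ℓ' H t : ℕ, 1 ≤ ℓ → 1 ≤ ℓ' → 1 ≤ H → 1 ≤ t →
      (H : ℝ) > 4 * ν * t →
      4 * ν * t > C₂ * ℓ ^ 2 * ε⁻¹ ^ 2 * (1 + |Real.log (ν * t) ^ 3|) →
      (ℓ' : ℝ) ≤ Real.sqrt t →
    ∀ η₀ : Config,
      ((∀ a : ℤ, -(H : ℤ) ≤ a → a + ℓ - 1 ≤ (H : ℤ) →
          (sumIcc η₀ a (a + ℓ - 1) : ℝ) ≤ (ρ + ε) * ℓ) →
        1 - ENNReal.ofReal (4 * H * Real.exp (-c₃ * ε ^ 2 * ℓ')) ≤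
          (P η₀) {tr : Traj | ∀ a : ℤ,
            -(H : ℝ) + 2 * ν * t ≤ (a : ℝ) → ((a + ℓ' - 1 : ℤ) : ℝ) ≤ (H : ℝ) - 2 * ν * t →
            (sumIcc (tr t) a (a + ℓ' - 1) : ℝ) ≤ (ρ + 3 * ε) * ℓ'}) ∧
      ((∀ a : ℤ, -(H : ℤ) ≤ a → a + ℓ - 1 ≤ (H : ℤ) →
          (ρ - ε) * ℓ ≤ (sumIcc η₀ a (a + ℓ - 1) : ℝ)) →
        1 - ENNReal.ofReal (4 * H * Real.exp (-c₃ * ε ^ 2 * ℓ')) ≤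
          (P η₀) {tr : Traj | ∀ a : ℤ,
            -(H : ℝ) + 2 * ν * t ≤ (a : ℝ) → ((a + ℓ' - 1 : ℤ) : ℝ) ≤ (H : ℝ) - 2 * ν * t →
            (ρ - 3 * ε) * ℓ' ≤ (sumIcc (tr t) a (a + ℓ' - 1) : ℝ)})

/-- (C.2): couplings. -/
def CouplingsProp (ν : ℝ) (J : Set ℝ) (P : Config → Measure Traj) : Prop :=
  ∃ C₃ C₄ : ℝ, 0 < C₃ ∧ 0 < C₄ ∧
    ∀ ρ ∈ J, ∀ ε : ℝ, ε ∈ Set.Ioo (0 : ℝ) 1 → ρ + ε ∈ J →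
    ∀ H₁ H₂ t ℓ : ℕ, 1 ≤ H₁ → 1 ≤ H₂ → 1 ≤ t → 1 ≤ ℓ →
      min (H₁ : ℝ) ((H₂ : ℝ) - H₁ - 1) > 10 * ν * t →
      10 * ν * t > 4 * ν * (ℓ : ℝ) ^ 100 →
      4 * ν * (ℓ : ℝ) ^ 100 > C₃ →
      ν * ℓ > C₃ * ε⁻¹ ^ 2 * (1 + |Real.log (ν * ℓ ^ 4) ^ 3|) →
      (ℓ : ℝ) > 80 * ν * ε⁻¹ + ν⁻¹ ^ 2 →
    ∀ η₀ η₀' : Config, DomOn η₀' η₀ (-(H₁ : ℤ)) (H₁ : ℤ) →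
      IntervalDensityGE η₀ H₂ ℓ (ρ + 3 * ε / 4) →
      IntervalDensityLE η₀' H₂ ℓ (ρ + ε / 4) →
      ∃ Q : Measure (Traj × Traj), IsCoupling (P η₀) (P η₀') Q ∧
        1 - ENNReal.ofReal (20 * t * Real.exp (-(ν * t) / 4)) ≤
          Q {p : Traj × Traj | ∀ s ≤ t,
            DomOnR (p.2 s) (p.1 s) (-(H₁ : ℝ) + 4 * ν * t) ((H₁ : ℝ) - 4 * ν * t)} ∧
        1 - ENNReal.ofReal (5 * C₄ * ℓ ^ 4 * H₂ *
            Real.exp (-C₄⁻¹ * (ν / (ν + 1)) * ε ^ 2 * ℓ)) ≤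
          Q {p : Traj × Traj |
            DomOnR (p.2 t) (p.1 t) (-(H₂ : ℝ) + 6 * ν * t) ((H₂ : ℝ) - 6 * ν * t)}

/-- (C.2.1): no particle drifting in from the side. -/
def DriftProp (ν : ℝ) (P : Config → Measure Traj) : Prop :=
  ∀ t H : ℕ, ∀ k : ℕ, 1 ≤ k → ∀ η₀ η₀' : Config, DomOn η₀' η₀ (-(H : ℤ)) (H : ℤ) →
    ∃ Q : Measure (Traj × Traj), IsCoupling (P η₀) (P η₀') Q ∧
      1 - ENNReal.ofReal (20 * Real.exp (-(k * ν * t) / 4)) ≤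
        Q {p : Traj × Traj | ∀ s ≤ t,
          DomOnR (p.2 s) (p.1 s) (-(H : ℝ) + 2 * ν * k * t) ((H : ℝ) - 2 * ν * k * t)}

/-- (C.2.2): covering `η'` by `η`. -/
def CoveringProp (ν : ℝ) (J : Set ℝ) (P : Config → Measure Traj) : Prop :=
  ∃ C₅ C₄ : ℝ, 0 < C₅ ∧ 0 < C₄ ∧
    ∀ ρ ∈ J, ∀ ε : ℝ, ε ∈ Set.Ioo (0 : ℝ) 1 → ρ + ε ∈ J →
    ∀ H t : ℕ, 1 ≤ H → 1 ≤ t →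
      (H : ℝ) > 4 * ν * t → ν ^ 8 * t > 1 →
      ν * (t : ℝ) ^ ((1 : ℝ) / 4) > C₅ * ε⁻¹ ^ 2 * (1 + |Real.log (ν * t) ^ 3|) →
    ∀ η₀ η₀' : Config,
      IntervalDensityGE η₀ H (⌊(t : ℝ) ^ ((1 : ℝ) / 4)⌋₊) (ρ + 3 * ε / 4) →
      IntervalDensityLE η₀' H (⌊(t : ℝ) ^ ((1 : ℝ) / 4)⌋₊) (ρ + ε / 4) →
      ∃ Q : Measure (Traj × Traj), IsCoupling (P η₀) (P η₀') Q ∧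
        1 - ENNReal.ofReal (C₄ * t * H *
            Real.exp (-(C₄ * (1 + ν⁻¹))⁻¹ * ε ^ 2 * (t : ℝ) ^ ((1 : ℝ) / 4))) ≤
          Q {p : Traj × Traj |
            DomOnR (p.2 t) (p.1 t) (-(H : ℝ) + 4 * ν * t) ((H : ℝ) - 4 * ν * t)}

/-- (C.3): sprinkler. -/
noncomputable def SprinklerProp (ν : ℝ) (J : Set ℝ) (P : Config → Measure Traj)
    (pO pB : ℝ) : Prop :=
  ∃ c₆ C₇ : ℝ, 0 < c₆ ∧ 0 < C₇ ∧
    ∀ ρ ∈ J, ∀ H ℓ k : ℕ, 1 ≤ H → 1 ≤ ℓ → 1 ≤ k →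
      (H : ℝ) ≥ 2 * ν * ℓ * k → (k : ℝ) ≥ C₇ →
    ∀ η₀ η₀' : Config, DomOn η₀' η₀ (-(H : ℤ)) (H : ℤ) →
      sumIcc η₀' 0 (ℓ : ℤ) + 1 ≤ sumIcc η₀ 0 (ℓ : ℤ) →
      (sumIcc η₀' (-3 * ℓ + 1) (3 * ℓ) : ℝ) ≤ 6 * (ρ + 1) * ℓ →
    ∀ x : ℤ, x = 0 ∨ x = 1 →
      ∃ Q : Measure (Traj × Traj), IsCoupling (P η₀) (P η₀') Q ∧
        ENNReal.ofReal (2 * c₆ ^ (6 * (ρ + 1) * (ℓ : ℝ))) ≤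
          Q {p : Traj × Traj | 0 < p.1 ℓ x ∧ p.2 ℓ x = 0} ∧
        Q ({p : Traj × Traj | ∀ s ≤ ℓ,
            DomOnR (p.2 s) (p.1 s) (-(H : ℝ) + 2 * ν * k * ℓ) ((H : ℝ) - 2 * ν * k * ℓ)}ᶜ)
          ≤ ENNReal.ofReal (20 * Real.exp (-(k * ν * ℓ) / 4)) ∧
        20 * Real.exp (-(k * ν * ℓ) / 4) ≤
          c₆ ^ (6 * (ρ + 1) * (ℓ : ℝ)) * (pO * (1 - pB)) ^ (6 * (ρ + 1) * (ℓ : ℝ))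

/-! ## The random walk on the environment -/

/-- One-step transition probability of the walk: jump `d` from a site with `occ` particles. -/
noncomputable def stepProb (pO pB : ℝ) (occ : ℕ) (d : ℤ) : ℝ :=
  if d = 1 then (if occ = 0 then pO else pB)
  else if d = -1 then (if occ = 0 then 1 - pO else 1 - pB)
  else 0

/-- `Pw` is the family of quenched laws of the random walk (started at the origin) with
parameters `p_∘ = pO`, `p_• = pB`, characterised through its cylinder probabilities. -/
def IsQuenchedWalk (pO pB : ℝ) (Pw : Traj → Measure (ℕ → ℤ)) : Prop :=
  (∀ η : Traj, IsProbabilityMeasure (Pw η)) ∧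
    ∀ (η : Traj) (x : ℕ → ℤ) (n : ℕ),
      Pw η {ω : ℕ → ℤ | ∀ k ≤ n, ω k = x k} =
        if x 0 = 0 then
          ENNReal.ofReal (∏ k ∈ Finset.range n, stepProb pO pB (η k (x k)) (x (k + 1) - x k))
        else 0

/-- The annealed law of the walk at density `ρ`. -/
noncomputable def annWalk (P : Config → Measure Traj) (μ : ℝ → Measure Config)
    (Pw : Traj → Measure (ℕ → ℤ)) (ρ : ℝ) : Measure (ℕ → ℤ) :=
  (Penv P μ ρ).bind Pw

/-! ## Finite-range (resampled) environments -/

/-- `PL ρ L` is the law of the environment at density `ρ` resampled from `μ ρ` at every multiple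
of `L`: the blocks of length `L` are i.i.d. with the law of one block of the stationary
environment. -/
def IsFiniteRange (P : Config → Measure Traj) (μ : ℝ → Measure Config)
    (J : Set ℝ) (PL : ℝ → ℕ → Measure Traj) : Prop :=
  ∀ ρ ∈ J, ∀ L : ℕ, 1 ≤ L → ∀ K : ℕ,
    (PL ρ L).map (fun tr : Traj => fun (k : Fin K) (t : Fin L) (x : ℤ) => tr ((k : ℕ) * L + t) x)
      = Measure.pi (fun _ : Fin K =>
          (Penv P μ ρ).map (fun tr : Traj => fun (t : Fin L) (x : ℤ) => tr t x))

/-- `v(ρ, L) = E^{ρ,L}[X_L / L]`. -/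
noncomputable def vFin (PL : ℝ → ℕ → Measure Traj) (Pw : Traj → Measure (ℕ → ℤ))
    (ρ : ℝ) (L : ℕ) : ℝ :=
  ∫ ω, ((ω L : ℝ) / L) ∂((PL ρ L).bind Pw)

/-! ## The APCRW -/

/-- Law of one step of an environment particle: right w.p. `αq`, left w.p. `α(1-q)`,
stay w.p. `1-α`. -/
noncomputable def stepMeasure (α q : ℝ) : Measure ℤ :=
  ENNReal.ofReal (α * q) • Measure.dirac 1 + ENNReal.ofReal (α * (1 - q)) • Measure.dirac (-1)
    + ENNReal.ofReal (1 - α) • Measure.dirac 0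

/-- The particles of an initial configuration `η₀`. -/
def Particle (η₀ : Config) : Type := Σ x : ℤ, Fin (η₀ x)

/-- Given steps for every particle of `η₀`, the resulting trajectory of occupation numbers. -/
noncomputable def countConfig (η₀ : Config) (s : Particle η₀ × ℕ → ℤ) : Traj :=
  fun t x => Set.ncard {p : Particle η₀ | p.1 + ∑ k ∈ Finset.range t, s (p, k) = x}

/-- A measure on `ι → β` has i.i.d. marginals `m` (product measure on every finite subfamily). -/
def HasIIDMarginals {ι β : Type*} [MeasurableSpace β] (m : Measure β)
    (ν : Measure (ι → β)) : Prop :=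
  ∀ F : Finset ι, ν.map (fun s (i : F) => s i.1) = Measure.pi (fun _ : F => m)

/-- `P` is the family of quenched laws of the APCRW with activity `α` and drift parameter `q`:
starting from `η₀`, the particles of `η₀` perform i.i.d. lazy asymmetric random walks. -/
def IsAPCRW (α q : ℝ) (P : Config → Measure Traj) : Prop :=
  ∀ η₀ : Config, ∃ ν : Measure ((Particle η₀ × ℕ) → ℤ),
    IsProbabilityMeasure ν ∧ HasIIDMarginals (stepMeasure α q) ν ∧
      P η₀ = ν.map (countConfig η₀)

/-- The Poisson distribution with parameter `ρ` on `ℕ`. -/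
noncomputable def poissonMeasure (ρ : ℝ) : Measure ℕ :=
  Measure.sum (fun n : ℕ =>
    ENNReal.ofReal (Real.exp (-ρ) * ρ ^ n / n.factorial) • Measure.dirac n)

/-- `m = Poisson(ρ)^{⊗ℤ}`. -/
def IsPoissonProduct (ρ : ℝ) (m : Measure Config) : Prop :=
  HasIIDMarginals (poissonMeasure ρ) m

/-! ## Superpositions -/

/-- Annealed law of the superposition of `N` independent environments. -/
noncomputable def superAnnealed {N : ℕ} (Penvs : Fin N → Measure Traj) : Measure Traj :=
  (Measure.pi Penvs).map (fun trajs : Fin N → Traj => fun t x => ∑ i, trajs i t x)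

/-- Quenched law of the (componentwise) superposition of `N` independent environments. -/
noncomputable def superQuenched {N : ℕ} (P : Fin N → Config → Measure Traj)
    (η₀ : ℤ → Fin N → ℕ) : Measure (ℕ → ℤ → Fin N → ℕ) :=
  (Measure.pi (fun i => P i (fun x => η₀ x i))).map
    (fun trajs : Fin N → Traj => fun t x i => trajs i t x)

/-! ## Deterministic walk construction (arrows) -/

/-- The space-time lattice `𝕃`. -/
def LatL : Set (ℤ × ℤ) := {w : ℤ × ℤ | 0 ≤ w.2 ∧ (w.1 + w.2) % 2 = 0}

/-- The arrow at `w`, built from the environment `η` and the uniform numbers `u`. -/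
noncomputable def arrow (pO pB : ℝ) (η : ℕ → ℤ → ℕ) (u : ℤ × ℤ → ℝ) (w : ℤ × ℤ) : ℤ :=
  if u w ≤ (pO - pB) * (if η w.2.toNat w.1 = 0 then 1 else 0) + pB then 1 else -1

/-- The walk trajectory started from the space-time point `w`, driven by `η` and `u`. -/
noncomputable def walkTraj (pO pB : ℝ) (η : ℕ → ℤ → ℕ) (u : ℤ × ℤ → ℝ) (w : ℤ × ℤ) : ℕ → ℤ
  | 0 => w.1
  | k + 1 => walkTraj pO pB η u w k + arrow pO pB η u (walkTraj pO pB η u w k, w.2 + k)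

/-! ## Heat kernels -/

/-- `k`-step heat kernel of the non-lazy asymmetric walk (step `+1` w.p. `q`). -/
noncomputable def qbarK (q : ℝ) (k : ℕ) (z : ℤ) : ℝ :=
  if |z| ≤ (k : ℤ) ∧ ((k : ℤ) + z) % 2 = 0 then
    (k.choose (((k : ℤ) + z) / 2).toNat : ℝ) * q ^ ((((k : ℤ) + z) / 2).toNat)
      * (1 - q) ^ ((((k : ℤ) - z) / 2).toNat)
  else 0

/-- `t`-step heat kernel of the lazy asymmetric walk (laziness `1-α`, right step prob. `αq`). -/
noncomputable def lazyKernel (α q : ℝ) (t : ℕ) (x y : ℤ) : ℝ :=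
  ∑ k ∈ Finset.range (t + 1), (t.choose k : ℝ) * α ^ k * (1 - α) ^ (t - k) * qbarK q k (y - x)

/-- The exponential distribution with rate 1 on `ℝ`. -/
noncomputable def expMeasure1 : Measure ℝ :=
  volume.withDensity (fun x => ENNReal.ofReal (if 0 ≤ x then Real.exp (-x) else 0))

/-! The components are coupled independently, each by its own sprinkler coupling. By
independence the good events multiply, and `∏ᵢ 2 cᵢ^(6(ρᵢ+1)ℓ) ≥ 2 c₆^(6Σᵢ(ρᵢ+1)ℓ)` for
`c₆ = minᵢ cᵢ`; a union bound adds the `N` failure probabilities, each at most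
`20 exp (-k νmin ℓ / 4)`; and `C₇` is taken so large that this sum is below
`(c₆ pO (1 - pB))^(6Σᵢ(ρᵢ+1)ℓ)`. -/

namespace IsCoupling

variable {A B C D : Type*} [MeasurableSpace A] [MeasurableSpace B] [MeasurableSpace C]
  [MeasurableSpace D] {μ₁ : Measure A} {μ₂ : Measure B} {Q : Measure (A × B)}

lemma isProbabilityMeasure (h : IsCoupling μ₁ μ₂ Q) [IsProbabilityMeasure μ₁] :
    IsProbabilityMeasure Q := by
  have h₁ : Q.map Prod.fst univ = 1 := by rw [h.1]; exact measure_univ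
  rw [Measure.map_apply measurable_fst MeasurableSet.univ, preimage_univ] at h₁
  exact ⟨h₁⟩

lemma map (h : IsCoupling μ₁ μ₂ Q) {f : A → C} {g : B → D} (hf : Measurable f)
    (hg : Measurable g) : IsCoupling (μ₁.map f) (μ₂.map g) (Q.map (Prod.map f g)) := by
  constructor
  · rw [Measure.map_map measurable_fst (hf.prodMap hg), ← h.1,
      Measure.map_map hf measurable_fst]
    rfl
  · rw [Measure.map_map measurable_snd (hf.prodMap hg), ← h.2,
      Measure.map_map hg measurable_snd]
    rfl

lemma pi {ι : Type*} [Fintype ι] {α β : ι → Type*} [∀ i, MeasurableSpace (α i)]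
    [∀ i, MeasurableSpace (β i)] {μ : ∀ i, Measure (α i)} {ν : ∀ i, Measure (β i)}
    {Q : ∀ i, Measure (α i × β i)} [∀ i, IsProbabilityMeasure (Q i)]
    (h : ∀ i, IsCoupling (μ i) (ν i) (Q i)) :
    IsCoupling (Measure.pi μ) (Measure.pi ν)
      ((Measure.pi Q).map fun g => (fun i => (g i).1, fun i => (g i).2)) := by
  have hunzip : Measurable fun g : ∀ i, α i × β i => (fun i => (g i).1, fun i => (g i).2) := by
    fun_prop
  constructor
  · rw [Measure.map_map measurable_fst hunzip]
    exact (Measure.pi_map_pi fun i => measurable_fst.aemeasurable).trans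
      (congrArg Measure.pi (funext fun i => (h i).1))
  · rw [Measure.map_map measurable_snd hunzip]
    exact (Measure.pi_map_pi fun i => measurable_snd.aemeasurable).trans
      (congrArg Measure.pi (funext fun i => (h i).2))

end IsCoupling

lemma two_mul_rpow_sum_le_prod {ι : Type*} [Fintype ι] [Nonempty ι] {c₀ : ℝ} {c e : ι → ℝ}
    (hc₀ : 0 < c₀) (hc : ∀ i, c₀ ≤ c i) (he : ∀ i, 0 ≤ e i) :
    2 * c₀ ^ (∑ i, e i) ≤ ∏ i, 2 * c i ^ e i := by
  have htwo : (2 : ℝ) ≤ 2 ^ Fintype.card ι :=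
    le_self_pow₀ one_le_two Fintype.card_pos.ne'
  rw [Real.rpow_sum_of_pos hc₀, Finset.prod_mul_distrib, Finset.prod_const, Finset.card_univ]
  exact mul_le_mul htwo (Finset.prod_le_prod (fun i _ => by positivity)
    fun i _ => Real.rpow_le_rpow hc₀.le (hc i) (he i)) (by positivity) (by positivity)

lemma mul_exp_neg_le_rpow {K γ r s B M L : ℝ} (hK : 1 ≤ K) (hγ : 0 < γ) (hM : -Real.log γ ≤ M)
    (hM₀ : 0 ≤ M) (hs : 0 ≤ s) (hsB : s ≤ B) (hL : 1 ≤ L) (hr : 4 * (Real.log K + B * M) ≤ r) :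
    K * Real.exp (-(r * L) / 4) ≤ γ ^ (s * L) := by
  have hlogK : 0 ≤ Real.log K := Real.log_nonneg hK
  rw [Real.rpow_def_of_pos hγ, ← Real.exp_log (by linarith : 0 < K), ← Real.exp_add]
  refine Real.exp_le_exp.2 ?_
  have hsM : s * -Real.log γ ≤ B * M :=
    (mul_le_mul_of_nonneg_left hM hs).trans (mul_le_mul_of_nonneg_right hsB hM₀)
  nlinarith [mul_le_mul_of_nonneg_left hsM (by linarith : 0 ≤ L),
    mul_le_mul_of_nonneg_left hr (by linarith : 0 ≤ L), mul_nonneg (sub_nonneg.2 hL) hlogK]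

lemma sum_ofReal_le_card_mul_inf' {ι : Type*} [Fintype ι]
    (hne : (Finset.univ : Finset ι).Nonempty) {f : ℝ → ℝ} (hf : Antitone f) (ν : ι → ℝ) :
    ∑ i, ENNReal.ofReal (f (ν i)) ≤
      ENNReal.ofReal (Fintype.card ι * f (Finset.univ.inf' hne ν)) := by
  rw [ENNReal.ofReal_mul (Nat.cast_nonneg _), ENNReal.ofReal_natCast]
  simpa using Finset.sum_le_card_nsmul Finset.univ _ _ fun i _ =>
    ENNReal.ofReal_le_ofReal (hf (Finset.inf'_le ν (Finset.mem_univ i)))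

section Superposition

variable {N : ℕ}

def superpose (g : Fin N → Traj) : ℕ → ℤ → Fin N → ℕ := fun t x i => g i t x

def component (i : Fin N) (η : ℕ → ℤ → Fin N → ℕ) : Traj := fun t x => η t x i

@[fun_prop]
lemma measurable_superpose : Measurable (superpose (N := N)) := by
  unfold superpose; fun_prop

@[fun_prop]
lemma measurable_component (i : Fin N) : Measurable (component i) := by
  unfold component; fun_prop

noncomputable def superCoupling (Q : Fin N → Measure (Traj × Traj)) :
    Measure ((ℕ → ℤ → Fin N → ℕ) × (ℕ → ℤ → Fin N → ℕ)) :=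
  (Measure.pi Q).map fun g => (superpose fun i => (g i).1, superpose fun i => (g i).2)

variable (Q : Fin N → Measure (Traj × Traj)) [∀ i, IsProbabilityMeasure (Q i)]

lemma isCoupling_superCoupling {P : Fin N → Config → Measure Traj} {η₀ η₀' : ℤ → Fin N → ℕ}
    (h : ∀ i, IsCoupling (P i fun x => η₀ x i) (P i fun x => η₀' x i) (Q i)) :
    IsCoupling (superQuenched P η₀) (superQuenched P η₀') (superCoupling Q) := by
  have h' := (IsCoupling.pi h).map measurable_superpose measurable_superpose
  rwa [Measure.map_map (by fun_prop) (by fun_prop)] at h'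

lemma prod_le_superCoupling (E : Fin N → Set (Traj × Traj)) :
    ∏ i, Q i (E i) ≤ superCoupling Q {p | ∀ i, (component i p.1, component i p.2) ∈ E i} := by
  rw [← Measure.pi_pi]
  refine (measure_mono fun g (hg : g ∈ univ.pi E) i => hg i trivial).trans ?_
  exact Measure.le_map_apply (by fun_prop) _

lemma map_component_superCoupling (i : Fin N) :
    (superCoupling Q).map (fun p => (component i p.1, component i p.2)) = Q i := by
  rw [superCoupling, Measure.map_map (by fun_prop) (by fun_prop)]
  exact (measurePreserving_eval Q i).map_eq

lemma superCoupling_iUnion_le (S : Fin N → Set (Traj × Traj)) :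
    superCoupling Q (⋃ i, {p | (component i p.1, component i p.2) ∈ S i}) ≤ ∑ i, Q i (S i) :=
  (measure_iUnion_fintype_le _ _).trans <| Finset.sum_le_sum fun i _ =>
    (Measure.le_map_apply (by fun_prop) (S i)).trans_eq (by rw [map_component_superCoupling])

lemma two_mul_rpow_sum_le_superCoupling [Nonempty (Fin N)] {c₀ : ℝ} {c e : Fin N → ℝ}
    (hc₀ : 0 < c₀) (hc : ∀ i, c₀ ≤ c i) (he : ∀ i, 0 ≤ e i) {E : Fin N → Set (Traj × Traj)}
    (hE : ∀ i, ENNReal.ofReal (2 * c i ^ e i) ≤ Q i (E i)) :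
    ENNReal.ofReal (2 * c₀ ^ ∑ i, e i) ≤
      superCoupling Q {p | ∀ i, (component i p.1, component i p.2) ∈ E i} :=
  calc ENNReal.ofReal (2 * c₀ ^ ∑ i, e i)
      ≤ ENNReal.ofReal (∏ i, 2 * c i ^ e i) :=
        ENNReal.ofReal_le_ofReal (two_mul_rpow_sum_le_prod hc₀ hc he)
    _ = ∏ i, ENNReal.ofReal (2 * c i ^ e i) :=
        ENNReal.ofReal_prod_of_nonneg fun i _ => by have := hc₀.trans_le (hc i); positivity
    _ ≤ ∏ i, Q i (E i) := Finset.prod_le_prod' fun i _ => hE i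
    _ ≤ _ := prod_le_superCoupling Q E

end Superposition

theorem superposition_sprinkler_general
    (N : ℕ) (hN : 0 < N)
    (a b νs : Fin N → ℝ) (hab : ∀ i, 0 < a i ∧ a i < b i) (hν : ∀ i, 0 < νs i)
    (pO pB : ℝ) (hpO : pO ∈ Set.Ioo (0 : ℝ) 1) (hpB : pB ∈ Set.Ioo (0 : ℝ) 1)
    (P : Fin N → Config → Measure Traj)
    (hP1 : ∀ i, MarkovProp (P i))
    (hC3 : ∀ i, SprinklerProp (νs i) (Set.Ioo (a i) (b i)) (P i) pO pB) :
    ∃ c₆ : ℝ, 0 < c₆ ∧ ∃ C₇ : ℝ,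
      C₇ ≥ 4 * (Real.log (20 * N) + 6 * ∑ i, (b i + 1)) /
        (Finset.univ.inf' ⟨⟨0, hN⟩, Finset.mem_univ _⟩ νs) ∧
      ∀ ρ : Fin N → ℝ, (∀ i, ρ i ∈ Set.Ioo (a i) (b i)) →
      ∀ H ℓ k : ℕ, 1 ≤ H → 1 ≤ ℓ → 1 ≤ k → (k : ℝ) ≥ C₇ →
        (∀ i, (H : ℝ) ≥ 2 * νs i * ℓ * k) →
      ∀ η₀ η₀' : ℤ → Fin N → ℕ,
        (∀ i, DomOn (fun x => η₀' x i) (fun x => η₀ x i) (-(H : ℤ)) (H : ℤ)) →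
        (∀ i, sumIcc (fun x => η₀' x i) 0 (ℓ : ℤ) + 1 ≤ sumIcc (fun x => η₀ x i) 0 (ℓ : ℤ)) →
        (∀ i, (sumIcc (fun x => η₀' x i) (-3 * ℓ + 1) (3 * ℓ) : ℝ) ≤ 6 * (ρ i + 1) * ℓ) →
      ∀ x : ℤ, x = 0 ∨ x = 1 →
      ∃ Q : Measure ((ℕ → ℤ → Fin N → ℕ) × (ℕ → ℤ → Fin N → ℕ)),
        IsCoupling (superQuenched P η₀) (superQuenched P η₀') Q ∧
        ENNReal.ofReal (2 * c₆ ^ (6 * (∑ i, (ρ i + 1)) * (ℓ : ℝ))) ≤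
          Q {p : (ℕ → ℤ → Fin N → ℕ) × (ℕ → ℤ → Fin N → ℕ) |
              (∃ i, 0 < p.1 ℓ x i) ∧ (∀ i, p.2 ℓ x i = 0)} ∧
        Q (⋃ i, {p : (ℕ → ℤ → Fin N → ℕ) × (ℕ → ℤ → Fin N → ℕ) | ∀ s ≤ ℓ,
            DomOnR (fun y => p.2 s y i) (fun y => p.1 s y i)
              (-(H : ℝ) + 2 * νs i * k * ℓ) ((H : ℝ) - 2 * νs i * k * ℓ)}ᶜ) ≤
          ENNReal.ofReal (20 * N *
            Real.exp (-((k : ℝ) * (Finset.univ.inf' ⟨⟨0, hN⟩, Finset.mem_univ _⟩ νs) * ℓ) / 4)) ∧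
        20 * N * Real.exp (-((k : ℝ) * (Finset.univ.inf' ⟨⟨0, hN⟩, Finset.mem_univ _⟩ νs) * ℓ) / 4)
          ≤ c₆ ^ (6 * (∑ i, (ρ i + 1)) * (ℓ : ℝ)) *
              (pO * (1 - pB)) ^ (6 * (∑ i, (ρ i + 1)) * (ℓ : ℝ)) := by
  have : Nonempty (Fin N) := ⟨⟨0, hN⟩⟩
  have hne : (Finset.univ : Finset (Fin N)).Nonempty := Finset.univ_nonempty
  choose c C hc _ hsprinkle using hC3
  set νmin := Finset.univ.inf' ⟨⟨0, hN⟩, Finset.mem_univ _⟩ νs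
  set c₆ := Finset.univ.inf' hne c
  have hνmin : 0 < νmin := (Finset.lt_inf'_iff _).2 fun i _ => hν i
  have hc₆ : 0 < c₆ := (Finset.lt_inf'_iff _).2 fun i _ => hc i
  have hβ : 0 < pO * (1 - pB) := mul_pos hpO.1 (sub_pos.2 hpB.2)
  -- `M ≥ 1` lets `C₇` exceed the required lower bound; `M ≥ -log (c₆ pO (1 - pB))` is what makes
  -- `20 N exp (-k νmin ℓ / 4) ≤ δ'` once `k ≥ C₇`
  set M := max 1 (-Real.log (c₆ * (pO * (1 - pB))))
  have hB : 0 ≤ ∑ i, (b i + 1) := Finset.sum_nonneg fun i _ => by linarith [hab i]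
  refine ⟨c₆, hc₆, max (Finset.univ.sup' hne C)
    (4 * (Real.log (20 * N) + 6 * (∑ i, (b i + 1)) * M) / νmin), ?_, ?_⟩
  · refine le_max_of_le_right (div_le_div_of_nonneg_right ?_ hνmin.le)
    nlinarith [le_max_left 1 (-Real.log (c₆ * (pO * (1 - pB))))]
  intro ρ hρ H ℓ k hH hℓ hk hkC hHν η₀ η₀' hdom hsum hbd x hx
  have hkC' : ∀ i, (k : ℝ) ≥ C i := fun i =>
    ((Finset.le_sup' C (Finset.mem_univ i)).trans (le_max_left _ _)).trans hkC
  choose Q hQ hQ₁ hQ₂ _ using fun i => hsprinkle i (ρ i) (hρ i) H ℓ k hH hℓ hk (hHν i)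
    (hkC' i) _ _ (hdom i) (hsum i) (hbd i) x hx
  have hP := fun i => (hP1 i).1
  have hQprob : ∀ i, IsProbabilityMeasure (Q i) := fun i => (hQ i).isProbabilityMeasure
  have hρ₁ : ∀ i, 0 ≤ ρ i + 1 := fun i => by linarith [(hρ i).1, (hab i).1]
  refine ⟨superCoupling Q, isCoupling_superCoupling Q hQ, ?_, ?_, ?_⟩
  · rw [Finset.mul_sum, Finset.sum_mul]
    refine (two_mul_rpow_sum_le_superCoupling Q hc₆
      (fun i => Finset.inf'_le _ (Finset.mem_univ i)) (fun i => by have := hρ₁ i; positivity)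
      hQ₁).trans (measure_mono fun p hp => ?_)
    exact ⟨⟨⟨0, hN⟩, (hp _).1⟩, fun i => (hp i).2⟩
  · have hanti : Antitone fun v : ℝ => 20 * Real.exp (-((k : ℝ) * v * ℓ) / 4) :=
      fun v w hvw => by dsimp only; gcongr
    calc _ ≤ _ := superCoupling_iUnion_le Q _
      _ ≤ _ := Finset.sum_le_sum fun i _ => hQ₂ i
      _ ≤ _ := sum_ofReal_le_card_mul_inf' hne hanti νs
      _ = _ := by rw [Fintype.card_fin]; congr 1; ring
  · rw [← Real.mul_rpow hc₆.le hβ.le]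
    refine mul_exp_neg_le_rpow (B := 6 * ∑ i, (b i + 1)) (by norm_cast; omega) (mul_pos hc₆ hβ)
      (le_max_right _ _) (zero_le_one.trans (le_max_left _ _))
      (mul_nonneg (by norm_num) (Finset.sum_nonneg fun i _ => hρ₁ i)) ?_ (by exact_mod_cast hℓ) ?_
    · gcongr with i; exact (hρ i).2.le
    · rw [← div_le_iff₀ hνmin]; exact (le_max_right _ _).trans hkC

/-- Proposition 2.1: a superposition of `N` independent environments each
satisfying (P.1)-(P.4) and the sprinkler condition (C.3) satisfies the adapted sprinkler
condition for superposed environments. -/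
theorem superposition_sprinkler
    (N : ℕ) (hN : 0 < N)
    (a b νs : Fin N → ℝ) (hab : ∀ i, 0 < a i ∧ a i < b i) (hν : ∀ i, 0 < νs i)
    (pO pB : ℝ) (hpO : pO ∈ Set.Ioo (0 : ℝ) 1) (hpB : pB ∈ Set.Ioo (0 : ℝ) 1) (hp : pO < pB)
    (P : Fin N → Config → Measure Traj) (μ : Fin N → ℝ → Measure Config)
    (hP1 : ∀ i, MarkovProp (P i))
    (hP2 : ∀ i, StationaryProp (P i) (μ i) (Set.Ioo (a i) (b i)))
    (hP3 : ∀ i, MonotoneProp (P i) (μ i) (Set.Ioo (a i) (b i)))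
    (hP4 : ∀ i, DensityProp (P i) (μ i) (Set.Ioo (a i) (b i)))
    (hC3 : ∀ i, SprinklerProp (νs i) (Set.Ioo (a i) (b i)) (P i) pO pB) :
    ∃ c₆ : ℝ, 0 < c₆ ∧ ∃ C₇ : ℝ,
      C₇ ≥ 4 * (Real.log (20 * N) + 6 * ∑ i, (b i + 1)) /
        (Finset.univ.inf' ⟨⟨0, hN⟩, Finset.mem_univ _⟩ νs) ∧
      ∀ ρ : Fin N → ℝ, (∀ i, ρ i ∈ Set.Ioo (a i) (b i)) →
      ∀ H ℓ k : ℕ, 1 ≤ H → 1 ≤ ℓ → 1 ≤ k → (k : ℝ) ≥ C₇ →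
        (∀ i, (H : ℝ) ≥ 2 * νs i * ℓ * k) →
      ∀ η₀ η₀' : ℤ → Fin N → ℕ,
        (∀ i, DomOn (fun x => η₀' x i) (fun x => η₀ x i) (-(H : ℤ)) (H : ℤ)) →
        (∀ i, sumIcc (fun x => η₀' x i) 0 (ℓ : ℤ) + 1 ≤ sumIcc (fun x => η₀ x i) 0 (ℓ : ℤ)) →
        (∀ i, (sumIcc (fun x => η₀' x i) (-3 * ℓ + 1) (3 * ℓ) : ℝ) ≤ 6 * (ρ i + 1) * ℓ) →
      ∀ x : ℤ, x = 0 ∨ x = 1 →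
      ∃ Q : Measure ((ℕ → ℤ → Fin N → ℕ) × (ℕ → ℤ → Fin N → ℕ)),
        IsCoupling (superQuenched P η₀) (superQuenched P η₀') Q ∧
        ENNReal.ofReal (2 * c₆ ^ (6 * (∑ i, (ρ i + 1)) * (ℓ : ℝ))) ≤
          Q {p : (ℕ → ℤ → Fin N → ℕ) × (ℕ → ℤ → Fin N → ℕ) |
              (∃ i, 0 < p.1 ℓ x i) ∧ (∀ i, p.2 ℓ x i = 0)} ∧
        Q (⋃ i, {p : (ℕ → ℤ → Fin N → ℕ) × (ℕ → ℤ → Fin N → ℕ) | ∀ s ≤ ℓ,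
            DomOnR (fun y => p.2 s y i) (fun y => p.1 s y i)
              (-(H : ℝ) + 2 * νs i * k * ℓ) ((H : ℝ) - 2 * νs i * k * ℓ)}ᶜ) ≤
          ENNReal.ofReal (20 * N *
            Real.exp (-((k : ℝ) * (Finset.univ.inf' ⟨⟨0, hN⟩, Finset.mem_univ _⟩ νs) * ℓ) / 4)) ∧
        20 * N * Real.exp (-((k : ℝ) * (Finset.univ.inf' ⟨⟨0, hN⟩, Finset.mem_univ _⟩ νs) * ℓ) / 4)
          ≤ c₆ ^ (6 * (∑ i, (ρ i + 1)) * (ℓ : ℝ)) *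
              (pO * (1 - pB)) ^ (6 * (∑ i, (ρ i + 1)) * (ℓ : ℝ)) :=
  superposition_sprinkler_general N hN a b νs hab hν pO pB hpO hpB P hP1 hC3
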